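/- For all n ∈ ℕ and all i with 1 ≤ i ≤ 2^n - 1, SD(t_n, (t_n t_n)[i .. 2^n + i - 1]) equals 0 if i = 2^{n-1}, and lies in [1/4, 3/4] otherwise. -/

import Mathlib

def mu (l : List ℕ) : List ℕ := l.flatMap (fun b => [b, 1 - b])
def tWord (n : ℕ) : List ℕ := mu^[n] [0]

/-- Similarity density of two finite words (of the same length). -/
noncomputable def SD (x y : List ℕ) : ℝ :=
  (List.zipWith (fun a b => if a = b then (1 : ℝ) else 0) x y).sum / x.length

/-! The word `t_n` lists `thueMorse 0, …, thueMorse (2^n - 1)`, where `thueMorse j` is the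
parity of the binary digit sum of `j`, and the window of `t_n t_n` starting at `i ≤ 2^n` is the
rotation of `t_n` by `i`. So the similarity density is `agreeCount n i / 2^n`, where
`agreeCount n i` counts the `j < 2^n` with `thueMorse j = thueMorse ((j + i) mod 2^n)`.
From `thueMorse (2j) = thueMorse j` and `thueMorse (2j+1) = 1 - thueMorse j` one gets
`A_{n+1}(2k) = 2 A_n(k)` and `A_{n+1}(2k+1) = 2^{n+1} - A_n(k) - A_n(k+1)` for `A_n = agreeCount n`,
and the bounds follow by induction on `n` once the invariant also controls the neighbours of the
two extreme shifts: `A_n(i) ≤ 2^{n-1}` next to `i = 0` and `A_n(i) ≥ 2^{n-1}` next to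
`i = 2^{n-1}`. -/

open Finset

def thueMorse (n : ℕ) : ℕ := (Nat.digits 2 n).sum % 2

lemma thueMorse_le_one (n : ℕ) : thueMorse n ≤ 1 :=
  Nat.le_of_lt_succ (Nat.mod_lt _ two_pos)

lemma thueMorse_two_mul (n : ℕ) : thueMorse (2 * n) = thueMorse n := by
  rcases Nat.eq_zero_or_pos n with rfl | hn
  · rfl
  · rw [thueMorse, Nat.digits_def' one_lt_two (by omega)]
    simp [thueMorse]

lemma thueMorse_two_mul_add_one (n : ℕ) : thueMorse (2 * n + 1) = 1 - thueMorse n := by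
  rw [thueMorse, Nat.digits_def' one_lt_two (by omega), show (2 * n + 1) / 2 = n by omega,
    List.sum_cons, thueMorse]
  omega

lemma range_two_mul_eq_flatMap (N : ℕ) :
    List.range (2 * N) = (List.range N).flatMap fun j => [2 * j, 2 * j + 1] := by
  induction N with
  | zero => rfl
  | succ N ih =>
    rw [Nat.mul_succ, List.range_succ, List.range_succ, List.range_succ, List.flatMap_append,
      ← ih]
    simp

lemma tWord_eq_map_range (n : ℕ) : tWord n = (List.range (2 ^ n)).map thueMorse := by
  induction n with
  | zero => rfl
  | succ n ih =>
    rw [tWord, Function.iterate_succ_apply', ← tWord, ih, mu, pow_succ', range_two_mul_eq_flatMap,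
      List.flatMap_map, List.map_flatMap]
    simp [thueMorse_two_mul, thueMorse_two_mul_add_one]

lemma take_drop_append_self_eq_rotate {α : Type*} (l : List α) {i : ℕ} (hi : i ≤ l.length) :
    ((l ++ l).drop i).take l.length = l.rotate i := by
  rw [List.drop_append_of_le_length hi, List.rotate_eq_drop_append_take hi, List.take_append,
    List.take_of_length_le (by simp), List.length_drop, Nat.sub_sub_self hi]

lemma rotate_map_range {α : Type*} (f : ℕ → α) (N i : ℕ) :
    ((List.range N).map f).rotate i = (List.range N).map (fun j => f ((j + i) % N)) :=
  List.ext_getElem (by simp) fun j _ _ => by simp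

lemma SD_map_range (f g : ℕ → ℕ) (N : ℕ) :
    SD ((List.range N).map f) ((List.range N).map g) =
      ((∑ j ∈ range N, if f j = g j then 1 else 0 : ℕ) : ℝ) / N := by
  rw [SD, List.zipWith_map, List.zipWith_self, List.length_map, List.length_range]
  push_cast
  rw [← List.sum_toFinset _ List.nodup_range, List.toFinset_range]

lemma sum_range_two_mul {M : Type*} [AddCommMonoid M] (f : ℕ → M) (N : ℕ) :
    ∑ j ∈ range (2 * N), f j = ∑ m ∈ range N, (f (2 * m) + f (2 * m + 1)) := by
  induction N with
  | zero => simp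
  | succ N ih => rw [Nat.mul_succ, sum_range_succ, sum_range_succ, sum_range_succ, ih, add_assoc]

lemma two_mul_add_one_mod_two_mul (x y : ℕ) : (2 * x + 1) % (2 * y) = 2 * (x % y) + 1 := by
  rw [Nat.mod_mul, show (2 * x + 1) / 2 = x by omega]
  omega

def agreeCount (n i : ℕ) : ℕ :=
  ∑ j ∈ range (2 ^ n), if thueMorse j = thueMorse ((j + i) % 2 ^ n) then 1 else 0

lemma agreeCount_zero (n : ℕ) : agreeCount n 0 = 2 ^ n := by
  rw [agreeCount, sum_congr rfl fun j hj => by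
    rw [add_zero, Nat.mod_eq_of_lt (mem_range.mp hj), if_pos rfl]]
  simp

lemma agreeCount_le (n i : ℕ) : agreeCount n i ≤ 2 ^ n :=
  (sum_le_card_nsmul _ _ 1 fun _ _ => by split <;> omega).trans (by simp)

lemma agreeCount_mod (n i : ℕ) : agreeCount n (i % 2 ^ n) = agreeCount n i := by
  simp only [agreeCount, Nat.add_mod_mod]

lemma agreeCount_two_pow (n : ℕ) : agreeCount n (2 ^ n) = 2 ^ n := by
  rw [← agreeCount_mod, Nat.mod_self, agreeCount_zero]

lemma agreeCount_two_mul (n k : ℕ) : agreeCount (n + 1) (2 * k) = 2 * agreeCount n k := by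
  rw [agreeCount, pow_succ', sum_range_two_mul, agreeCount, mul_sum]
  refine sum_congr rfl fun m _ => ?_
  rw [← mul_add, Nat.mul_mod_mul_left, show 2 * m + 1 + 2 * k = 2 * (m + k) + 1 by ring,
    two_mul_add_one_mod_two_mul, thueMorse_two_mul, thueMorse_two_mul, thueMorse_two_mul_add_one,
    thueMorse_two_mul_add_one]
  have := thueMorse_le_one m
  have := thueMorse_le_one ((m + k) % 2 ^ n)
  split_ifs <;> omega

lemma agreeCount_two_mul_add_one (n k : ℕ) :
    agreeCount (n + 1) (2 * k + 1) + agreeCount n k + agreeCount n (k + 1) = 2 ^ (n + 1) := by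
  rw [agreeCount, pow_succ', sum_range_two_mul, agreeCount, agreeCount, ← sum_add_distrib,
    ← sum_add_distrib]
  refine (sum_congr rfl fun m _ => ?_).trans
    (by simp [mul_comm] : ∑ _m ∈ range (2 ^ n), 2 = 2 * 2 ^ n)
  rw [show 2 * m + (2 * k + 1) = 2 * (m + k) + 1 by ring,
    show 2 * m + 1 + (2 * k + 1) = 2 * (m + (k + 1)) by ring,
    two_mul_add_one_mod_two_mul, Nat.mul_mod_mul_left, thueMorse_two_mul, thueMorse_two_mul,
    thueMorse_two_mul_add_one, thueMorse_two_mul_add_one]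
  have := thueMorse_le_one m
  have := thueMorse_le_one ((m + k) % 2 ^ n)
  have := thueMorse_le_one ((m + (k + 1)) % 2 ^ n)
  split_ifs <;> omega

lemma SD_tWord_window (n i : ℕ) (hi : i ≤ 2 ^ n) :
    SD (tWord n) (((tWord n ++ tWord n).drop i).take (2 ^ n)) = agreeCount n i / 2 ^ n := by
  have hlen : (tWord n).length = 2 ^ n := by simp [tWord_eq_map_range]
  rw [← hlen, take_drop_append_self_eq_rotate _ (hlen ▸ hi), tWord_eq_map_range,
    rotate_map_range, SD_map_range, agreeCount]
  push_cast
  rfl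

structure AgreeCountBounds (n : ℕ) : Prop where
  half : agreeCount n (2 ^ (n - 1)) = 0
  quarter : ∀ i < 2 ^ n, i ≠ 0 → i ≠ 2 ^ (n - 1) →
    2 ^ n ≤ 4 * agreeCount n i ∧ 4 * agreeCount n i ≤ 3 * 2 ^ n
  near_zero : ∀ i < 2 ^ n, (i = 1 ∨ i + 1 = 2 ^ n) → i ≠ 2 ^ (n - 1) →
    2 * agreeCount n i ≤ 2 ^ n
  near_half : ∀ i < 2 ^ n, (i + 1 = 2 ^ (n - 1) ∨ i = 2 ^ (n - 1) + 1) → i ≠ 0 →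
    2 ^ n ≤ 2 * agreeCount n i

namespace AgreeCountBounds

variable {n : ℕ}

lemma one : AgreeCountBounds 1 where
  half := by decide
  quarter := by omega
  near_zero := by norm_num; omega
  near_half := by norm_num; omega

lemma agreeCount_add_succ_bounds (h : AgreeCountBounds n) (hn : 1 ≤ n) {k : ℕ}
    (hk : k < 2 ^ n) :
    2 ^ n ≤ 2 * (agreeCount n k + agreeCount n (k + 1)) ∧
      2 * (agreeCount n k + agreeCount n (k + 1)) ≤ 3 * 2 ^ n := by
  have hN : 2 ^ n = 2 * 2 ^ (n - 1) := by rw [← pow_succ', Nat.sub_add_cancel hn]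
  have hH : 1 ≤ 2 ^ (n - 1) := Nat.one_le_two_pow
  by_cases hk0 : k = 0
  · rw [hk0, zero_add, agreeCount_zero]
    by_cases h1 : 1 = 2 ^ (n - 1)
    · have : agreeCount n 1 = 0 := by rw [h1]; exact h.half
      omega
    · have := h.near_zero 1 (by omega) (.inl rfl) h1
      omega
  by_cases hkN : k + 1 = 2 ^ n
  · rw [hkN, agreeCount_two_pow]
    by_cases hkH : k = 2 ^ (n - 1)
    · rw [hkH, h.half]
      omega
    · have := h.near_zero k hk (.inr hkN) hkH
      omega
  by_cases hkH : k = 2 ^ (n - 1)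
  · have := hkH ▸ h.half
    have := h.near_half (k + 1) (by omega) (.inr (by omega)) (by omega)
    have := (h.quarter (k + 1) (by omega) (by omega) (by omega)).2
    omega
  by_cases hkH' : k + 1 = 2 ^ (n - 1)
  · have := hkH' ▸ h.half
    have := h.near_half k hk (.inl hkH') hk0
    have := (h.quarter k hk hk0 hkH).2
    omega
  have := h.quarter k hk hk0 hkH
  have := h.quarter (k + 1) (by omega) (by omega) hkH'
  omega

lemma succ (h : AgreeCountBounds n) (hn : 1 ≤ n) : AgreeCountBounds (n + 1) := by
  have hN : 2 ^ n = 2 * 2 ^ (n - 1) := by rw [← pow_succ', Nat.sub_add_cancel hn]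
  have hN' : 2 ^ (n + 1) = 2 * 2 ^ n := pow_succ' 2 n
  refine ⟨?_, ?_, ?_, ?_⟩ <;> simp only [Nat.add_sub_cancel]
  · rw [hN, agreeCount_two_mul, h.half]
  · intro i hi hi0 hiH
    obtain ⟨k, rfl | rfl⟩ := Nat.even_or_odd' i
    · have := h.quarter k (by omega) (by omega) (by omega)
      rw [agreeCount_two_mul]
      omega
    · have := agreeCount_two_mul_add_one n k
      have := h.agreeCount_add_succ_bounds hn (k := k) (by omega)
      omega
  · intro i hi hi1 _
    obtain ⟨k, rfl | rfl⟩ := Nat.even_or_odd' i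
    · omega
    · have := agreeCount_two_mul_add_one n k
      rcases hi1 with hi1 | hi1
      · obtain rfl : k = 0 := by omega
        have := agreeCount_zero n
        omega
      · rw [show k + 1 = 2 ^ n by omega, agreeCount_two_pow] at this
        omega
  · intro i hi hiH hi0
    obtain ⟨k, rfl | rfl⟩ := Nat.even_or_odd' i
    · omega
    · have := agreeCount_two_mul_add_one n k
      rcases hiH with hiH | hiH
      · rw [show k + 1 = 2 ^ (n - 1) by omega, h.half] at this
        have := agreeCount_le n k
        omega
      · obtain rfl : k = 2 ^ (n - 1) := by omega
        rw [h.half] at this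
        have := agreeCount_le n (2 ^ (n - 1) + 1)
        omega

end AgreeCountBounds

lemma agreeCountBounds_of_one_le (n : ℕ) (hn : 1 ≤ n) : AgreeCountBounds n := by
  induction n, hn using Nat.le_induction with
  | base => exact .one
  | succ n hn h => exact h.succ hn

theorem technical_one_b (n i : ℕ) (h1 : 1 ≤ i) (h2 : i ≤ 2 ^ n - 1) :
    (i = 2 ^ (n - 1) →
      SD (tWord n) (((tWord n ++ tWord n).drop i).take (2 ^ n)) = 0) ∧
    (i ≠ 2 ^ (n - 1) →
      SD (tWord n) (((tWord n ++ tWord n).drop i).take (2 ^ n)) ∈ Set.Icc (1/4 : ℝ) (3/4)) := by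
  have hi : i < 2 ^ n := by omega
  have hn : 1 ≤ n := Nat.pos_of_ne_zero (by rintro rfl; omega)
  have h := agreeCountBounds_of_one_le n hn
  rw [SD_tWord_window n i hi.le]
  refine ⟨fun hiH => by simp [hiH, h.half], fun hiH => ?_⟩
  obtain ⟨hlo, hhi⟩ := h.quarter i hi (by omega) hiH
  have hlo : (2 : ℝ) ^ n ≤ 4 * agreeCount n i := by exact_mod_cast hlo
  have hhi : 4 * (agreeCount n i : ℝ) ≤ 3 * 2 ^ n := by exact_mod_cast hhi
  have hpos : (0 : ℝ) < 2 ^ n := by positivity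
  constructor
  · rw [le_div_iff₀ hpos]
    linarith
  · rw [div_le_iff₀ hpos]
    linarith
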